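/- arXiv:1003.4489 — 6 statements merged into one kernel-verified Lean document; each statement's English description precedes it below -/
import Mathlib

section
/- Let L be a co-Heyting algebra and let a, b, c ∈ L satisfy c ⊔ a = b. Then the map f(x) = x ⊔ a is a surjective Brouwer homomorphism from the interval [⊥, c] onto the interval [a, b]: (i) f(⊥) = a and f(c) = b; (ii) for x, y ≤ c, (x ⊔ y) ⊔ a = (x ⊔ a) ⊔ (y ⊔ a) and (x ⊓ y) ⊔ a = (x ⊔ a) ⊓ (y ⊔ a); (iii) for every u with a ≤ u ≤ b there is x ≤ c with x ⊔ a = u; (iv) f preserves the relative implication: for all x, y ≤ c, a ⊔ ((y ⊔ a) \ (x ⊔ a)) = a ⊔ (y \ x). -/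
theorem joinMap_brouwer_hom_onto_interval {L : Type*} [CoheytingAlgebra L]
    {a b c : L} (h : c ⊔ a = b) :
    ((⊥ : L) ⊔ a = a ∧ c ⊔ a = b) ∧
    (∀ x y : L, x ≤ c → y ≤ c →
      (x ⊔ y) ⊔ a = (x ⊔ a) ⊔ (y ⊔ a) ∧ (x ⊓ y) ⊔ a = (x ⊔ a) ⊓ (y ⊔ a)) ∧
    (∀ u : L, a ≤ u → u ≤ b → ∃ x : L, x ≤ c ∧ x ⊔ a = u) ∧
    (∀ x y : L, x ≤ c → y ≤ c →
      a ⊔ ((y ⊔ a) \ (x ⊔ a)) = a ⊔ (y \ x)) := by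
  refine ⟨⟨bot_sup_eq a, h⟩, ?_, ?_, ?_⟩
  · intro x y _ _
    constructor
    · rw [sup_sup_sup_comm, sup_idem]
    · rw [sup_inf_right]
  · intro u hau hub
    refine ⟨u \ a, ?_, ?_⟩
    · rw [sdiff_le_iff, sup_comm, h]; exact hub
    · rw [sdiff_sup_cancel hau]
  · intro x y _ _
    apply le_antisymm
    · apply sup_le le_sup_left
      rw [sdiff_le_iff]
      apply sup_le
      · calc y ≤ x ⊔ y \ x := le_sup_sdiff
          _ ≤ (x ⊔ a) ⊔ (a ⊔ y \ x) := by
              apply sup_le_sup le_sup_left le_sup_right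
      · exact le_sup_of_le_left le_sup_right
    · apply sup_le le_sup_left
      rw [sdiff_le_iff]
      calc y ≤ y ⊔ a := le_sup_left
        _ ≤ (x ⊔ a) ⊔ (y ⊔ a) \ (x ⊔ a) := le_sup_sdiff
        _ ≤ x ⊔ (a ⊔ (y ⊔ a) \ (x ⊔ a)) := by rw [← sup_assoc]
end

section
/- A finite distributive lattice L is weakly projective if and only if it is not double diamond-like; here weak projectivity is taken in its equivalent Balbes–Dwinger form: for all join-irreducible a, b ∈ L, the meet a ⊓ b is either the bottom element ⊥ or is again join-irreducible. That is: (∀ a b, SupIrred a → SupIrred b → (a ⊓ b = ⊥ ∨ SupIrred (a ⊓ b))) ↔ L is not dd-like. -/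
/-- `u` is a minimal upper bound of `a` and `b` within the poset `J(L)` of
join-irreducible elements: `u ∈ J(L)` is an upper bound of `a` and `b`, and no
`v ∈ J(L)` with `v < u` is an upper bound of `a` and `b`. -/
def IsMinimalSupIrredUpperBound {L : Type*} [Lattice L] (a b u : L) : Prop :=
  SupIrred u ∧ a ≤ u ∧ b ≤ u ∧ ∀ v : L, SupIrred v → a ≤ v → b ≤ v → ¬v < u

/-- A lattice is double diamond-like (dd-like) if the poset of its join-irreducible
elements contains two incomparable elements having at least two distinct minimal
upper bounds. -/
def DDLike (L : Type*) [Lattice L] : Prop :=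
  ∃ a b u v : L, SupIrred a ∧ SupIrred b ∧ ¬a ≤ b ∧ ¬b ≤ a ∧ u ≠ v ∧
    IsMinimalSupIrredUpperBound a b u ∧ IsMinimalSupIrredUpperBound a b v

theorem weaklyProjective_iff_not_ddLike {L : Type*} [DistribLattice L] [OrderBot L]
    [Fintype L] :
    (∀ a b : L, SupIrred a → SupIrred b → a ⊓ b = ⊥ ∨ SupIrred (a ⊓ b)) ↔ ¬DDLike L := by
  constructor
  · rintro hW ⟨a, b, u, v, ha, hb, -, -, huv,
      ⟨hu, hau, hbu, humin⟩, ⟨hv, hav, hbv, hvmin⟩⟩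
    have haiv : a ≤ u ⊓ v := le_inf hau hav
    have hne : u ⊓ v ≠ ⊥ := fun h => ha.ne_bot (le_bot_iff.1 (h ▸ haiv))
    have hirr : SupIrred (u ⊓ v) := (hW u v hu hv).resolve_left hne
    have h1 : u ⊓ v = u := by
      by_contra h
      exact humin _ hirr haiv (le_inf hbu hbv) (lt_of_le_of_ne inf_le_left h)
    have h2 : u ⊓ v = v := by
      by_contra h
      exact hvmin _ hirr (le_inf hau hav) (le_inf hbu hbv) (lt_of_le_of_ne inf_le_right h)
    exact huv (h1 ▸ h2)
  · intro hND a b ha hb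
    by_contra hcon
    push_neg at hcon
    obtain ⟨hne, hcirr⟩ := hcon
    set c := a ⊓ b with hc
    -- Find two sup-irreducibles below c with no common sup-irred upper bound below c
    have key : ∃ p q : L, SupIrred p ∧ SupIrred q ∧ p ≤ c ∧ q ≤ c ∧
        ∀ w : L, SupIrred w → p ≤ w → q ≤ w → ¬w ≤ c := by
      by_contra h
      push_neg at h
      -- then c would be sup-irred: decompose c as sup of sup-irreds
      obtain ⟨s, hs, hsirr⟩ := exists_supIrred_decomposition c
      have hsle : ∀ x ∈ s, x ≤ c := fun x hx => hs ▸ Finset.le_sup (f := id) hx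
      have hsne : s.Nonempty := by
        rcases s.eq_empty_or_nonempty with h' | h'
        · exact absurd (by simp [h'] at hs; exact hs.symm) hne
        · exact h'
      -- by induction, get a single sup-irred m ≤ c above all of s
      have aux : ∀ s : Finset L, s.Nonempty → (∀ x ∈ s, SupIrred x) → (∀ x ∈ s, x ≤ c) →
          ∃ m : L, SupIrred m ∧ m ≤ c ∧ s.sup id ≤ m := by
        intro s hsne
        induction hsne using Finset.Nonempty.cons_induction with
        | singleton x =>
          intro h1 h2
          exact ⟨x, h1 x (by simp), h2 x (by simp), by simp⟩
        | cons x t hxt ht ih =>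
          intro h1 h2
          obtain ⟨m, hm, hmc, hms⟩ := ih
            (fun y hy => h1 y (Finset.mem_cons_of_mem hy))
            (fun y hy => h2 y (Finset.mem_cons_of_mem hy))
          obtain ⟨w, hw, hxw, hmw, hwc⟩ := h x m (h1 x (Finset.mem_cons_self x t)) hm
            (h2 x (Finset.mem_cons_self x t)) hmc
          refine ⟨w, hw, hwc, ?_⟩
          simp only [Finset.sup_cons, sup_le_iff]
          exact ⟨hxw, le_trans hms hmw⟩
      obtain ⟨m, hm, hmc, hsm⟩ := aux s hsne (fun x hx => hsirr hx) hsle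
      have : c = m := le_antisymm (hs ▸ hsm) hmc
      exact hcirr (this ▸ hm)
    obtain ⟨p, q, hp, hq, hpc, hqc, hkey⟩ := key
    -- p and q are incomparable
    have hpq : ¬p ≤ q := fun h => hkey q hq h le_rfl hqc
    have hqp : ¬q ≤ p := fun h => hkey p hp le_rfl h hpc
    -- minimal sup-irred upper bound of p,q below a
    have getmin : ∀ x : L, SupIrred x → p ≤ x → q ≤ x →
        ∃ u : L, u ≤ x ∧ IsMinimalSupIrredUpperBound p q u := by
      intro x hx hpx hqx
      obtain ⟨u, ⟨hu, hpu, hqu, hux⟩, hminu⟩ :=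
        (wellFounded_lt (α := L)).has_min
          {w : L | SupIrred w ∧ p ≤ w ∧ q ≤ w ∧ w ≤ x} ⟨x, hx, hpx, hqx, le_rfl⟩
      exact ⟨u, hux, hu, hpu, hqu, fun w hw hpw hqw hwu =>
        hminu w ⟨hw, hpw, hqw, le_trans hwu.le hux⟩ hwu⟩
    obtain ⟨u, hua, humin⟩ := getmin a ha (le_trans hpc inf_le_left) (le_trans hqc inf_le_left)
    obtain ⟨v, hvb, hvmin⟩ := getmin b hb (le_trans hpc inf_le_right) (le_trans hqc inf_le_right)
    have huv : u ≠ v := by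
      rintro rfl
      exact hkey u humin.1 humin.2.1 humin.2.2.1 (le_inf hua hvb)
    exact hND ⟨p, q, u, v, hp, hq, hpq, hqp, huv, humin, hvmin⟩
end

section
/- If L is a finite distributive lattice that is not double diamond-like, then the lattice WithTop L obtained by adjoining a new top element to L (i.e. the stacked sum L + I₁, identifying the bottom of the two-element lattice I₁ with the top of L) is a finite distributive lattice that is not double diamond-like. -/
theorem coe_supIrred_iff {L : Type*} [Lattice L] {x : L} :
    SupIrred (x : WithTop L) ↔ SupIrred x := by
  constructor
  · rintro ⟨hmin, hsup⟩
    refine ⟨fun h => hmin fun z hz => ?_, fun b c hbc => ?_⟩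
    · obtain ⟨z', rfl, hz'⟩ := WithTop.le_coe_iff.1 hz
      exact WithTop.coe_le_coe.2 (h (WithTop.coe_le_coe.1 hz))
    · have : (b : WithTop L) ⊔ (c : WithTop L) = (x : WithTop L) := by
        rw [← WithTop.coe_sup, hbc]
      rcases hsup this with h | h
      · exact Or.inl (WithTop.coe_injective h)
      · exact Or.inr (WithTop.coe_injective h)
  · rintro ⟨hmin, hsup⟩
    refine ⟨fun h => hmin fun y hy => ?_, fun b c hbc => ?_⟩
    · exact WithTop.coe_le_coe.1 (h (WithTop.coe_le_coe.2 hy))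
    · have hb : b ≠ ⊤ := by
        rintro rfl; simp at hbc
      have hc : c ≠ ⊤ := by
        rintro rfl; simp at hbc
      lift b to L using hb
      lift c to L using hc
      rw [← WithTop.coe_sup, WithTop.coe_eq_coe] at hbc
      rcases hsup hbc with h | h
      · exact Or.inl (by rw [h])
      · exact Or.inr (by rw [h])

theorem withTop_not_ddLike {L : Type*} [DistribLattice L] [Fintype L]
    (hL : ¬DDLike L) : ¬DDLike (WithTop L) := by
  intro h
  obtain ⟨a, b, u, v, hsa, hsb, hab, hba, huv, hu, hv⟩ := h
  -- a and b are not ⊤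
  have ha' : a ≠ ⊤ := by rintro rfl; exact hba le_top
  have hb' : b ≠ ⊤ := by rintro rfl; exact hab le_top
  lift a to L using ha'
  lift b to L using hb'
  -- u and v are not ⊤
  have hune : u ≠ ⊤ := by
    rintro rfl
    have hvne : v ≠ ⊤ := fun hv' => huv hv'.symm
    exact hu.2.2.2 v hv.1 hv.2.1 hv.2.2.1 (lt_top_iff_ne_top.2 hvne)
  have hvne : v ≠ ⊤ := by
    rintro rfl
    exact hv.2.2.2 u hu.1 hu.2.1 hu.2.2.1 (lt_top_iff_ne_top.2 hune)
  lift u to L using hune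
  lift v to L using hvne
  refine hL ⟨a, b, u, v, (coe_supIrred_iff).1 hsa, (coe_supIrred_iff).1 hsb,
    fun h => hab (WithTop.coe_le_coe.2 h), fun h => hba (WithTop.coe_le_coe.2 h),
    fun h => huv (by rw [h]), ?_, ?_⟩ <;>
  [ (refine ⟨(coe_supIrred_iff).1 hu.1, WithTop.coe_le_coe.1 hu.2.1,
      WithTop.coe_le_coe.1 hu.2.2.1, fun w hw haw hbw hlt => ?_⟩;
     exact hu.2.2.2 w ((coe_supIrred_iff).2 hw) (WithTop.coe_le_coe.2 haw)
       (WithTop.coe_le_coe.2 hbw) (WithTop.coe_lt_coe.2 hlt));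
    (refine ⟨(coe_supIrred_iff).1 hv.1, WithTop.coe_le_coe.1 hv.2.1,
      WithTop.coe_le_coe.1 hv.2.2.1, fun w hw haw hbw hlt => ?_⟩;
     exact hv.2.2.2 w ((coe_supIrred_iff).2 hw) (WithTop.coe_le_coe.2 haw)
       (WithTop.coe_le_coe.2 hbw) (WithTop.coe_lt_coe.2 hlt))]
end

section
/- If L is a finite distributive lattice that is not double diamond-like and n ≥ 1, then the finite power Fin n → L (the n-fold product lattice Lⁿ with componentwise order) is not double diamond-like. -/
section Aux

variable {L : Type*} [Lattice L] {n : ℕ}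

lemma single_supIrred (z : L) (hz : ∀ x : L, z ≤ x) (i : Fin n) {x : L}
    (hx : SupIrred x) : SupIrred (Function.update (fun _ => z) i x) := by
  constructor
  · intro hmin
    apply hx.1
    intro y hy
    have hW : Function.update (fun _ : Fin n => z) i y ≤ Function.update (fun _ => z) i x := by
      intro m
      by_cases hm : m = i
      · subst hm; simpa using hy
      · simp [Function.update_of_ne hm]
    have := hmin hW i
    simpa using this
  · intro B C hBC
    have hi : B i ⊔ C i = x := by
      have := congrFun hBC i; simpa using this
    have hside : ∀ m, m ≠ i → B m = z ∧ C m = z := by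
      intro m hm
      have h1 : B m ⊔ C m = z := by
        have := congrFun hBC m
        simpa [Function.update_of_ne hm] using this
      exact ⟨le_antisymm (le_sup_left.trans h1.le) (hz _),
        le_antisymm (le_sup_right.trans h1.le) (hz _)⟩
    rcases hx.2 hi with h | h
    · left
      funext m
      by_cases hm : m = i
      · subst hm; simpa using h
      · simp [Function.update_of_ne hm, (hside m hm).1]
    · right
      funext m
      by_cases hm : m = i
      · subst hm; simpa using h
      · simp [Function.update_of_ne hm, (hside m hm).2]

lemma pi_supIrred (z : L) (hz : ∀ x : L, z ≤ x) {u : Fin n → L} (hu : SupIrred u) :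
    ∃ i, SupIrred (u i) ∧ ∀ j, j ≠ i → u j = z := by
  obtain ⟨i, hi⟩ : ∃ i, u i ≠ z := by
    by_contra h
    push_neg at h
    apply hu.1
    intro w _ m
    rw [h m]; exact hz _
  have hsupp : ∀ j, j ≠ i → u j = z := by
    intro j hj
    by_contra hji
    have heq : Function.update u i z ⊔ Function.update (fun _ => z) i (u i) = u := by
      funext m
      by_cases hm : m = i
      · subst hm; simp [sup_eq_right.2 (hz _)]
      · simp [Function.update_of_ne hm, sup_eq_left.2 (hz (u m))]
    rcases hu.2 heq with h | h
    · exact hi (by simpa using (congrFun h i).symm)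
    · exact hji (by simpa [Function.update_of_ne hj] using (congrFun h j).symm)
  refine ⟨i, ⟨?_, ?_⟩, hsupp⟩
  · intro hmin
    exact hi (le_antisymm (hmin (hz _)) (hz _))
  · intro b c hbc
    have heq : Function.update (fun _ : Fin n => z) i b ⊔ Function.update (fun _ => z) i c = u := by
      funext m
      by_cases hm : m = i
      · subst hm; simpa using hbc
      · simp [Function.update_of_ne hm, hsupp m hm]
    rcases hu.2 heq with h | h
    · left; simpa using congrFun h i
    · right; simpa using congrFun h i

end Aux

theorem pi_not_ddLike {L : Type*} [DistribLattice L] [Fintype L] (n : ℕ) (hn : 1 ≤ n)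
    (hL : ¬DDLike L) : ¬DDLike (Fin n → L) := by
  intro hD
  obtain ⟨a, b, u, v, ha, hb, hab, hba, huv, hu, hv⟩ := hD
  haveI : Nonempty L := ⟨a ⟨0, hn⟩⟩
  set z : L := Finset.univ.inf' Finset.univ_nonempty id with hzdef
  have hz : ∀ x : L, z ≤ x := fun x => Finset.inf'_le id (Finset.mem_univ x)
  obtain ⟨ia, haI, haS⟩ := pi_supIrred z hz ha
  obtain ⟨ib, hbI, hbS⟩ := pi_supIrred z hz hb
  obtain ⟨iu, huI, huS⟩ := pi_supIrred z hz hu.1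
  obtain ⟨iv, hvI, hvS⟩ := pi_supIrred z hz hv.1
  have key : ∀ (c w : Fin n → L) (ic iw : Fin n), SupIrred (c ic) →
      (∀ j, j ≠ iw → w j = z) → c ≤ w → ic = iw := by
    intro c w ic iw hcI hwS hcw
    by_contra h
    have hle : c ic ≤ z := (hcw ic).trans_eq (hwS ic h)
    have hceq : c ic = z := le_antisymm hle (hz _)
    exact hcI.1 (fun y _ => hceq.trans_le (hz y))
  have e1 : ia = iu := key a u ia iu haI huS hu.2.1
  have e2 : ib = iu := key b u ib iu hbI huS hu.2.2.1
  have e3 : ia = iv := key a v ia iv haI hvS hv.2.1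
  have eab : ib = ia := e2.trans e1.symm
  apply hL
  refine ⟨a ia, b ia, u ia, v ia, haI, ?_, ?_, ?_, ?_, ?_, ?_⟩
  · rw [← eab]; exact hbI
  · intro h
    apply hab
    intro m
    by_cases hm : m = ia
    · subst hm; exact h
    · rw [haS m hm]; exact hz _
  · intro h
    apply hba
    intro m
    by_cases hm : m = ia
    · subst hm; exact h
    · rw [hbS m (eab ▸ hm)]; exact hz _
  · intro h
    apply huv
    funext m
    by_cases hm : m = ia
    · subst hm; exact h
    · rw [huS m (e1 ▸ hm), hvS m (e3 ▸ hm)]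
  · refine ⟨by rw [e1]; exact huI, hu.2.1 ia, hu.2.2.1 ia, ?_⟩
    intro w hw haw hbw hlt
    refine hu.2.2.2 (Function.update (fun _ => z) ia w)
      (single_supIrred z hz ia hw) ?_ ?_ ?_
    · intro m
      by_cases hm : m = ia
      · subst hm; simpa using haw
      · rw [haS m hm]; simp [Function.update_of_ne hm]
    · intro m
      by_cases hm : m = ia
      · subst hm; simpa using hbw
      · rw [hbS m (eab ▸ hm)]; simp [Function.update_of_ne hm]
    · apply lt_of_le_of_ne
      · intro m
        by_cases hm : m = ia
        · subst hm; simpa using hlt.le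
        · simp only [Function.update_of_ne hm]; exact hz _
      · intro h
        exact hlt.ne (by simpa using congrFun h ia)
  · refine ⟨by rw [e3]; exact hvI, hv.2.1 ia, hv.2.2.1 ia, ?_⟩
    intro w hw haw hbw hlt
    refine hv.2.2.2 (Function.update (fun _ => z) ia w)
      (single_supIrred z hz ia hw) ?_ ?_ ?_
    · intro m
      by_cases hm : m = ia
      · subst hm; simpa using haw
      · rw [haS m hm]; simp [Function.update_of_ne hm]
    · intro m
      by_cases hm : m = ia
      · subst hm; simpa using hbw
      · rw [hbS m (eab ▸ hm)]; simp [Function.update_of_ne hm]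
    · apply lt_of_le_of_ne
      · intro m
        by_cases hm : m = ia
        · subst hm; simpa using hlt.le
        · simp only [Function.update_of_ne hm]; exact hz _
      · intro h
        exact hlt.ne (by simpa using congrFun h ia)
end

section
/- Every lattice in Jaśkowski's sequence is a finite distributive lattice that is not double diamond-like: defining I₁ to be the two-element lattice (Bool) and I_{n+1} := WithTop (Fin n → I_n) (i.e. I_{n+1} = I_nⁿ + I₁, the n-fold power of I_n with a new top adjoined), for every n ≥ 1 the lattice I_n is a finite distributive lattice that is not dd-like (hence weakly projective). -/
/-- Jaśkowski's sequence of lattices: `I₁` is the two-element lattice `Bool`, and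
`I_{n+1} = I_nⁿ + I₁`, i.e. the `n`-fold power of `I_n` with a new top element adjoined. -/
def Jaskowski : ℕ → Type
  | 0 => Bool
  | 1 => Bool
  | (n + 2) => WithTop (Fin (n + 1) → Jaskowski (n + 1))

instance instJaskowskiDistribLattice : ∀ n, DistribLattice (Jaskowski n)
  | 0 => inferInstanceAs (DistribLattice Bool)
  | 1 => inferInstanceAs (DistribLattice Bool)
  | (n + 2) =>
    letI := instJaskowskiDistribLattice (n + 1)
    inferInstanceAs (DistribLattice (WithTop (Fin (n + 1) → Jaskowski (n + 1))))

instance instJaskowskiFintype : ∀ n, Fintype (Jaskowski n)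
  | 0 => inferInstanceAs (Fintype Bool)
  | 1 => inferInstanceAs (Fintype Bool)
  | (n + 2) =>
    letI := instJaskowskiFintype (n + 1)
    inferInstanceAs (Fintype (Option (Fin (n + 1) → Jaskowski (n + 1))))


theorem supIrred_coe_withTop {A : Type*} [Lattice A] {a : A} :
    SupIrred (a : WithTop A) ↔ SupIrred a := by
  constructor
  · rintro ⟨h1, h2⟩
    refine ⟨fun hm => h1 ?_, fun b c hbc => ?_⟩
    · intro x hx
      cases x with
      | top => exact le_top
      | coe x => exact_mod_cast hm (by exact_mod_cast hx)
    · have := h2 (b := (b : WithTop A)) (c := (c : WithTop A))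
        (by rw [← WithTop.coe_sup, hbc])
      rcases this with h | h
      · exact Or.inl (by exact_mod_cast h)
      · exact Or.inr (by exact_mod_cast h)
  · rintro ⟨h1, h2⟩
    refine ⟨fun hm => h1 ?_, fun b c hbc => ?_⟩
    · intro x hx
      have := hm (b := (x : WithTop A)) (by exact_mod_cast hx)
      exact_mod_cast this
    · lift b to A using ((le_sup_left.trans_eq hbc).trans_lt (WithTop.coe_lt_top a)).ne
      lift c to A using ((le_sup_right.trans_eq hbc).trans_lt (WithTop.coe_lt_top a)).ne
      rw [← WithTop.coe_sup] at hbc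
      rcases h2 (b := b) (c := c) (by exact_mod_cast hbc) with h | h
      · exact Or.inl (by exact_mod_cast h)
      · exact Or.inr (by exact_mod_cast h)

theorem supIrred_pi {ι : Type*} [DecidableEq ι] {K : ι → Type*} [∀ i, Lattice (K i)]
    [∀ i, OrderBot (K i)] {f : ∀ i, K i} :
    SupIrred f ↔ ∃ i, SupIrred (f i) ∧ ∀ j, j ≠ i → f j = ⊥ := by
  constructor
  · intro hf
    have hne : f ≠ ⊥ := hf.ne_bot
    have hex : ∃ i, f i ≠ ⊥ := by
      by_contra h
      push_neg at h
      exact hne (funext fun i => h i)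
    obtain ⟨i, hi⟩ := hex
    refine ⟨i, ?_, fun j hj => ?_⟩
    · refine ⟨fun hm => hi (hm.eq_of_ge bot_le), fun b c hbc => ?_⟩
      · have := hf.2 (show Function.update f i b ⊔ Function.update f i c = f from ?_)
        · rcases this with h | h
          · exact Or.inl (by simpa using congrFun h i)
          · exact Or.inr (by simpa using congrFun h i)
        · funext k
          by_cases hk : k = i
          · subst hk; simp [hbc]
          · simp [Function.update_of_ne hk]
    · by_contra hjb
      have := hf.2 (show Function.update f j ⊥ ⊔ Function.update (⊥ : ∀ i, K i) j (f j) = f from ?_)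
      · rcases this with h | h
        · exact hjb (by simpa using (congrFun h j).symm)
        · exact hi (by simpa [Function.update_of_ne (Ne.symm hj)] using (congrFun h i).symm)
      · funext k
        by_cases hk : k = j
        · subst hk; simp
        · simp [Function.update_of_ne hk]
  · rintro ⟨i, hfi, hsupp⟩
    refine ⟨fun hm => hfi.ne_bot (congrFun (hm.eq_of_ge bot_le) i), fun b c hbc => ?_⟩
    have hoff : ∀ j, j ≠ i → b j = f j ∧ c j = f j := by
      intro j hj
      have h1 : b j ⊔ c j = f j := congrFun hbc j
      rw [hsupp j hj] at h1 ⊢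
      exact ⟨le_antisymm (le_sup_left.trans_eq h1) bot_le,
        le_antisymm (le_sup_right.trans_eq h1) bot_le⟩
    rcases hfi.2 (show b i ⊔ c i = f i from congrFun hbc i) with h | h
    · exact Or.inl (funext fun j => by
        by_cases hj : j = i
        · subst hj; exact h
        · exact (hoff j hj).1)
    · exact Or.inr (funext fun j => by
        by_cases hj : j = i
        · subst hj; exact h
        · exact (hoff j hj).2)

theorem not_ddLike_withTop_pi {ι K : Type*} [DecidableEq ι] [Lattice K] [OrderBot K]
    (hK : ¬DDLike K) : ¬DDLike (WithTop (ι → K)) := by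
  rintro ⟨a, b, u, v, ha, hb, hab, hba, huv, hu, hv⟩
  have haT : a ≠ ⊤ := fun h => hba (h ▸ le_top)
  have hbT : b ≠ ⊤ := fun h => hab (h ▸ le_top)
  lift a to (ι → K) using haT
  lift b to (ι → K) using hbT
  obtain ⟨i, hpi, hfs⟩ := supIrred_pi.1 (supIrred_coe_withTop.1 ha)
  obtain ⟨j, hqj, hgs⟩ := supIrred_pi.1 (supIrred_coe_withTop.1 hb)
  -- transfer: a sup-irreducible coe upper bound of a single-supported element
  -- is single-supported at the same index
  have key : ∀ (h : ι → K), SupIrred ((h : WithTop (ι → K))) →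
      ∀ (f : ι → K) (k : ι), (∀ j', j' ≠ k → f j' = ⊥) → f k ≠ ⊥ →
      (f : WithTop (ι → K)) ≤ (h : WithTop (ι → K)) →
      SupIrred (h k) ∧ (∀ j', j' ≠ k → h j' = ⊥) ∧ f k ≤ h k := by
    intro h hh f k hfsupp hfk hle
    obtain ⟨k', hk', hs⟩ := supIrred_pi.1 (supIrred_coe_withTop.1 hh)
    have hfh : f ≤ h := by exact_mod_cast hle
    have hkk : k' = k := by
      by_contra hne
      exact hfk (le_bot_iff.1 ((hfh k).trans_eq (hs k (Ne.symm hne))))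
    subst hkk
    exact ⟨hk', hs, hfh _⟩
  by_cases hij : i = j
  · subst hij
    set p := a i with hp
    set q := b i with hq
    have hpq : ¬p ≤ q := by
      intro hle
      refine hab (WithTop.coe_le_coe.2 fun k => ?_)
      by_cases hk : k = i
      · subst hk; exact hle
      · rw [hfs k hk]; exact bot_le
    have hqp : ¬q ≤ p := by
      intro hle
      refine hba (WithTop.coe_le_coe.2 fun k => ?_)
      by_cases hk : k = i
      · subst hk; exact hle
      · rw [hgs k hk]; exact bot_le
    have huT : u ≠ ⊤ := by
      intro hT
      have hvT : v ≠ ⊤ := fun h => huv (hT.trans h.symm)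
      exact hu.2.2.2 v hv.1 hv.2.1 hv.2.2.1 (hT ▸ lt_top_iff_ne_top.2 hvT)
    have hvT : v ≠ ⊤ := by
      intro hT
      exact hv.2.2.2 u hu.1 hu.2.1 hu.2.2.1 (hT ▸ lt_top_iff_ne_top.2 (fun h => huv (h.trans hT.symm)))
    lift u to (ι → K) using huT
    lift v to (ι → K) using hvT
    obtain ⟨hru, hus, hpu⟩ := key u hu.1 a i hfs hpi.ne_bot hu.2.1
    obtain ⟨hrv, hvs, hpv⟩ := key v hv.1 a i hfs hpi.ne_bot hv.2.1
    have hqu : q ≤ u i := (key u hu.1 b i hgs hqj.ne_bot hu.2.2.1).2.2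
    have hqv : q ≤ v i := (key v hv.1 b i hgs hqj.ne_bot hv.2.2.1).2.2
    -- minimality transfer
    have hmin : ∀ (w : ι → K), SupIrred (w i) → (∀ j', j' ≠ i → w j' = ⊥) →
        p ≤ w i → q ≤ w i →
        IsMinimalSupIrredUpperBound (a : WithTop (ι → K)) (b : WithTop (ι → K)) ((w : WithTop (ι → K))) →
        ∀ s : K, SupIrred s → p ≤ s → q ≤ s → ¬s < w i := by
      intro w hwi hws hpw hqw hw s hs hps hqs hslt
      set g : ι → K := Function.update ⊥ i s with hg
      have hgsupp : ∀ j', j' ≠ i → g j' = ⊥ := fun j' hj' => by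
        simp [hg, Function.update_of_ne hj']
      have hgi : g i = s := by simp [hg]
      have hgirr : SupIrred ((g : WithTop (ι → K))) :=
        supIrred_coe_withTop.2 (supIrred_pi.2 ⟨i, hgi ▸ hs, hgsupp⟩)
      have hag : (a : WithTop (ι → K)) ≤ g := by
        refine WithTop.coe_le_coe.2 fun k => ?_
        by_cases hk : k = i
        · subst hk; exact hgi ▸ hps
        · rw [hfs k hk]; exact bot_le
      have hbg : (b : WithTop (ι → K)) ≤ g := by
        refine WithTop.coe_le_coe.2 fun k => ?_
        by_cases hk : k = i
        · subst hk; exact hgi ▸ hqs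
        · rw [hgs k hk]; exact bot_le
      refine hw.2.2.2 g hgirr hag hbg ?_
      refine WithTop.coe_lt_coe.2 (lt_of_le_of_ne ?_ ?_)
      · intro k
        by_cases hk : k = i
        · subst hk; exact hgi ▸ hslt.le
        · rw [hgsupp k hk]; exact bot_le
      · intro hgw
        exact hslt.ne (hgi ▸ congrFun hgw i)
    have hmu := hmin u hru hus hpu hqu hu
    have hmv := hmin v hrv hvs hpv hqv hv
    have huvi : u i = v i := by
      by_contra hne
      exact hK ⟨p, q, u i, v i, hpi, hqj, hpq, hqp, hne,
        ⟨hru, hpu, hqu, hmu⟩, ⟨hrv, hpv, hqv, hmv⟩⟩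
    refine huv (congrArg _ (funext fun k => ?_))
    by_cases hk : k = i
    · subst hk; exact huvi
    · rw [hus k hk, hvs k hk]
  · -- different supports: both u and v must be ⊤
    have htop : ∀ w : WithTop (ι → K), IsMinimalSupIrredUpperBound
        (a : WithTop (ι → K)) (b : WithTop (ι → K)) w → w = ⊤ := by
      intro w hw
      cases w with
      | top => rfl
      | coe h =>
        obtain ⟨_, hhs, _⟩ := key h hw.1 a i hfs hpi.ne_bot hw.2.1
        obtain ⟨_, hhs', _⟩ := key h hw.1 b j hgs hqj.ne_bot hw.2.2.1
        exact absurd (le_bot_iff.1 ((key h hw.1 b j hgs hqj.ne_bot hw.2.2.1).2.2.trans_eq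
          (hhs j (Ne.symm hij)))) hqj.ne_bot
    exact huv ((htop u hu).trans (htop v hv).symm)


theorem not_ddLike_bool : ¬DDLike Bool := by
  rintro ⟨a, b, u, v, ha, hb, hab, hba, -⟩
  rcases le_total a b with h | h
  · exact hab h
  · exact hba h

noncomputable instance instJaskowskiOrderBot : ∀ n, OrderBot (Jaskowski n)
  | 0 => inferInstanceAs (OrderBot Bool)
  | 1 => inferInstanceAs (OrderBot Bool)
  | (n + 2) =>
    letI := instJaskowskiOrderBot (n + 1)
    inferInstanceAs (OrderBot (WithTop (Fin (n + 1) → Jaskowski (n + 1))))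

theorem jaskowski_not_ddLike : ∀ n : ℕ, 1 ≤ n → Finite (Jaskowski n) ∧ ¬DDLike (Jaskowski n) := by
  intro n
  induction n with
  | zero => intro h; exact absurd h (by omega)
  | succ n ih =>
    intro _
    cases n with
    | zero => exact ⟨Finite.of_fintype _, not_ddLike_bool⟩
    | succ m =>
      refine ⟨Finite.of_fintype _, ?_⟩
      exact not_ddLike_withTop_pi ((ih (by omega)).2)
end

section
/- A finite distributive lattice is weakly projective if and only if its order dual is weakly projective; in the finite Balbes–Dwinger form: a finite distributive lattice L satisfies (∀ a b, SupIrred a → SupIrred b → (a ⊓ b = ⊥ ∨ SupIrred (a ⊓ b))) if and only if it satisfies the dual condition (∀ a b, InfIrred a → InfIrred b → (a ⊔ b = ⊤ ∨ InfIrred (a ⊔ b))). -/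
attribute [local instance] Classical.propDecidable

/-- The dual notion: `u` is a maximal lower bound of `a` and `b` within the poset of
meet-irreducible elements. -/
private def IsMaximalInfIrredLowerBound {L : Type*} [Lattice L] (a b u : L) : Prop :=
  InfIrred u ∧ u ≤ a ∧ u ≤ b ∧ ∀ v : L, InfIrred v → v ≤ a → v ≤ b → ¬u < v

/-- The order dual of `DDLike`. -/
private def DDLikeDual (L : Type*) [Lattice L] : Prop :=
  ∃ a b u v : L, InfIrred a ∧ InfIrred b ∧ ¬a ≤ b ∧ ¬b ≤ a ∧ u ≠ v ∧
    IsMaximalInfIrredLowerBound a b u ∧ IsMaximalInfIrredLowerBound a b v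

section Aux
variable {L : Type*} [Lattice L] [Fintype L]

private lemma aux_max {S : Set L} {x : L} (hx : x ∈ S) :
    ∃ m ∈ S, x ≤ m ∧ ∀ y ∈ S, ¬ m < y := by
  obtain ⟨m, hm, hmax⟩ := (Finite.to_wellFoundedGT (α := L)).wf.has_min
    {y ∈ S | x ≤ y} ⟨x, hx, le_refl x⟩
  exact ⟨m, hm.1, hm.2, fun y hy hlt => hmax y ⟨hy, hm.2.trans hlt.le⟩ hlt⟩

private lemma aux_min {S : Set L} {x : L} (hx : x ∈ S) :
    ∃ m ∈ S, m ≤ x ∧ ∀ y ∈ S, ¬ y < m := by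
  obtain ⟨m, hm, hmin⟩ := (Finite.to_wellFoundedLT (α := L)).wf.has_min
    {y ∈ S | y ≤ x} ⟨x, hx, le_refl x⟩
  exact ⟨m, hm.1, hm.2, fun y hy hlt => hmin y ⟨hy, hlt.le.trans hm.2⟩ hlt⟩

/-- In a finite lattice with bottom, `DDLike` is equivalent to the failure of the
Balbes–Dwinger condition on join-irreducible elements. -/
private lemma ddlike_iff [OrderBot L] :
    DDLike L ↔ ∃ a b : L, SupIrred a ∧ SupIrred b ∧ a ⊓ b ≠ ⊥ ∧ ¬ SupIrred (a ⊓ b) := by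
  constructor
  · rintro ⟨a, b, u, v, ha, hb, hab, hba, huv, ⟨hu, hau, hbu, humin⟩, ⟨hv, hav, hbv, hvmin⟩⟩
    refine ⟨u, v, hu, hv, ?_, ?_⟩
    · intro h
      exact ha.ne_bot (le_bot_iff.mp (h ▸ le_inf hau hav))
    · intro hw
      rcases eq_or_lt_of_le (inf_le_left : u ⊓ v ≤ u) with heq | hlt
      · have huv2 : u ≤ v := inf_eq_left.mp heq
        exact hvmin u hu hau hbu (lt_of_le_of_ne huv2 huv)
      · exact humin _ hw (le_inf hau hav) (le_inf hbu hbv) hlt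
  · rintro ⟨a', b', ha', hb', hne, hnirr⟩
    set c := a' ⊓ b' with hc
    obtain ⟨s, hs, hsirr⟩ := exists_supIrred_decomposition c
    have hsne : s.Nonempty := by
      rcases s.eq_empty_or_nonempty with rfl | h
      · simp at hs; exact absurd hs.symm hne
      · exact h
    obtain ⟨x, hx⟩ := hsne
    have hxS : x ∈ {w : L | SupIrred w ∧ w ≤ c} := ⟨hsirr hx, hs ▸ Finset.le_sup (f := id) hx⟩
    obtain ⟨p, hpS, _, hpmax⟩ := aux_max hxS
    have hq0 : ∃ q0 ∈ {w : L | SupIrred w ∧ w ≤ c}, ¬ q0 ≤ p := by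
      by_contra h
      push_neg at h
      have : c ≤ p := by
        rw [← hs]
        exact Finset.sup_le fun y hy => h y ⟨hsirr hy, hs ▸ Finset.le_sup (f := id) hy⟩
      exact hnirr (le_antisymm this hpS.2 ▸ hpS.1)
    obtain ⟨q0, hq0S, hq0p⟩ := hq0
    obtain ⟨q, hqS, hq0q, hqmax⟩ := aux_max hq0S
    have hqp : ¬ q ≤ p := fun h => hq0p (hq0q.trans h)
    have hpq : ¬ p ≤ q := by
      intro h
      rcases eq_or_lt_of_le h with rfl | hlt
      · exact hqp le_rfl
      · exact hpmax q hqS hlt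
    have haS : a' ∈ {w : L | SupIrred w ∧ p ≤ w ∧ q ≤ w ∧ w ≤ a'} :=
      ⟨ha', hpS.2.trans inf_le_left, hqS.2.trans inf_le_left, le_rfl⟩
    obtain ⟨u, huS, _, humin⟩ := aux_min haS
    have hbS : b' ∈ {w : L | SupIrred w ∧ p ≤ w ∧ q ≤ w ∧ w ≤ b'} :=
      ⟨hb', hpS.2.trans inf_le_right, hqS.2.trans inf_le_right, le_rfl⟩
    obtain ⟨v, hvS, _, hvmin⟩ := aux_min hbS
    have huMin : IsMinimalSupIrredUpperBound p q u :=
      ⟨huS.1, huS.2.1, huS.2.2.1, fun w hw hpw hqw hlt =>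
        humin w ⟨hw, hpw, hqw, hlt.le.trans huS.2.2.2⟩ hlt⟩
    have hvMin : IsMinimalSupIrredUpperBound p q v :=
      ⟨hvS.1, hvS.2.1, hvS.2.2.1, fun w hw hpw hqw hlt =>
        hvmin w ⟨hw, hpw, hqw, hlt.le.trans hvS.2.2.2⟩ hlt⟩
    have huv : u ≠ v := by
      rintro rfl
      have hucS : u ∈ {w : L | SupIrred w ∧ w ≤ c} :=
        ⟨huS.1, le_inf huS.2.2.2 hvS.2.2.2⟩
      have hpu : p = u := by
        rcases eq_or_lt_of_le huS.2.1 with h | h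
        · exact h
        · exact absurd h (hpmax u hucS)
      have hqu : q = u := by
        rcases eq_or_lt_of_le huS.2.2.1 with h | h
        · exact h
        · exact absurd h (hqmax u hucS)
      exact hqp (hqu ▸ hpu ▸ le_rfl)
    exact ⟨p, q, u, v, hpS.1, hqS.1, hpq, hqp, huv, huMin, hvMin⟩

end Aux

section Transfer
variable {L : Type*} [Lattice L]

open OrderDual

private lemma minUB_toDual {a b u : L} :
    IsMinimalSupIrredUpperBound (toDual a) (toDual b) (toDual u) ↔
      IsMaximalInfIrredLowerBound a b u := by
  unfold IsMinimalSupIrredUpperBound IsMaximalInfIrredLowerBound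
  simp [OrderDual.forall, supIrred_toDual]

private lemma maxLB_toDual {a b u : L} :
    IsMaximalInfIrredLowerBound (toDual a) (toDual b) (toDual u) ↔
      IsMinimalSupIrredUpperBound a b u := by
  unfold IsMinimalSupIrredUpperBound IsMaximalInfIrredLowerBound
  simp [OrderDual.forall, infIrred_toDual]

private lemma ddlike_orderDual_iff : DDLike Lᵒᵈ ↔ DDLikeDual L := by
  unfold DDLike DDLikeDual
  rw [OrderDual.exists]
  refine exists_congr fun a => ?_
  rw [OrderDual.exists]
  refine exists_congr fun b => ?_
  rw [OrderDual.exists]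
  refine exists_congr fun u => ?_
  rw [OrderDual.exists]
  refine exists_congr fun v => ?_
  simp only [supIrred_toDual, toDual_le_toDual, ne_eq, OrderDual.toDual_inj, minUB_toDual]
  tauto

private lemma ddlikeDual_orderDual_iff : DDLikeDual Lᵒᵈ ↔ DDLike L := by
  unfold DDLike DDLikeDual
  rw [OrderDual.exists]
  refine exists_congr fun a => ?_
  rw [OrderDual.exists]
  refine exists_congr fun b => ?_
  rw [OrderDual.exists]
  refine exists_congr fun u => ?_
  rw [OrderDual.exists]
  refine exists_congr fun v => ?_
  simp only [infIrred_toDual, toDual_le_toDual, ne_eq, OrderDual.toDual_inj, maxLB_toDual]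
  tauto

end Transfer

section Dstar
variable {L : Type*} [DistribLattice L] [BoundedOrder L] [Fintype L]

/-- For a join-irreducible (hence join-prime) `p` in a finite distributive lattice,
`dstar p` is the largest element not above `p`; it is meet-irreducible. -/
private noncomputable def dstar (p : L) : L :=
  (Finset.univ.filter fun x => ¬ p ≤ x).sup id

private lemma le_dstar {p x : L} (hp : SupIrred p) : x ≤ dstar p ↔ ¬ p ≤ x := by
  constructor
  · intro hx hpx
    obtain ⟨y, hy, hpy⟩ := hp.supPrime.le_finset_sup.mp (hpx.trans hx)
    exact (Finset.mem_filter.mp hy).2 hpy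
  · intro h
    exact Finset.le_sup (f := id) (by simp [h])

private lemma infIrred_dstar {p : L} (hp : SupIrred p) : InfIrred (dstar p) := by
  constructor
  · intro h
    exact ((le_dstar hp).mp (h le_top)) le_top
  · intro b c hbc
    by_contra hne
    push_neg at hne
    have hb : p ≤ b := by
      by_contra h
      exact hne.1 (le_antisymm ((le_dstar hp).mpr h) (hbc ▸ inf_le_left))
    have hc : p ≤ c := by
      by_contra h
      exact hne.2 (le_antisymm ((le_dstar hp).mpr h) (hbc ▸ inf_le_right))
    exact ((le_dstar hp).mp (hbc ▸ le_inf hb hc)) le_rfl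

private lemma dstar_le_dstar {p q : L} (hp : SupIrred p) (hq : SupIrred q) :
    dstar p ≤ dstar q ↔ p ≤ q := by
  rw [le_dstar hq, le_dstar hp]
  exact not_not

private lemma dstar_surj {m : L} (hm : InfIrred m) : ∃ p, SupIrred p ∧ dstar p = m := by
  set p := (Finset.univ.filter fun x => ¬ x ≤ m).inf id with hp
  have hnm : ¬ p ≤ m := by
    intro h
    obtain ⟨y, hy, h'⟩ := hm.infPrime.finset_inf_le.mp h
    exact (Finset.mem_filter.mp hy).2 h'
  have hmin : ∀ x : L, ¬ x ≤ m → p ≤ x := fun x hx =>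
    Finset.inf_le (f := id) (by simp [hx])
  have hps : SupIrred p := by
    constructor
    · intro h
      exact hnm ((h bot_le).trans bot_le)
    · intro b c hbc
      by_contra hne
      push_neg at hne
      have hb : b ≤ m := by
        by_contra h
        exact hne.1 (le_antisymm (hbc ▸ le_sup_left) (hmin b h))
      have hc : c ≤ m := by
        by_contra h
        exact hne.2 (le_antisymm (hbc ▸ le_sup_right) (hmin c h))
      exact hnm (hbc ▸ sup_le hb hc)
  refine ⟨p, hps, le_antisymm ?_ ((le_dstar hps).mpr hnm)⟩
  refine Finset.sup_le fun x hx => ?_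
  by_contra h
  exact (Finset.mem_filter.mp hx).2 (hmin x h)

/-- Key bridge: a dd-like configuration of join-irreducibles yields a dual dd-like
configuration of meet-irreducibles. -/
private lemma ddlikeDual_of_ddlike (h : DDLike L) : DDLikeDual L := by
  obtain ⟨a, b, u, v, ha, hb, hab, hba, huv,
    ⟨hu, hau, hbu, humin⟩, ⟨hv, hav, hbv, hvmin⟩⟩ := h
  have hnuv : ¬ u ≤ v := fun h' => hvmin u hu hau hbu (lt_of_le_of_ne h' huv)
  have hnvu : ¬ v ≤ u := fun h' => humin v hv hav hbv (lt_of_le_of_ne h' (Ne.symm huv))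
  have haS : a ∈ {w : L | SupIrred w ∧ w ≤ u ∧ w ≤ v} := ⟨ha, hau, hav⟩
  obtain ⟨m, hmS, ham, hmmax⟩ := aux_max haS
  have hbS : b ∈ {w : L | SupIrred w ∧ w ≤ u ∧ w ≤ v} := ⟨hb, hbu, hbv⟩
  obtain ⟨m', hm'S, hbm', hm'max⟩ := aux_max hbS
  have hmm' : m ≠ m' := by
    rintro rfl
    have h1 : m = u := by
      rcases eq_or_lt_of_le hmS.2.1 with h' | h'
      · exact h'
      · exact absurd h' (humin m hmS.1 ham hbm')
    have h2 : m = v := by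
      rcases eq_or_lt_of_le hmS.2.2 with h' | h'
      · exact h'
      · exact absurd h' (hvmin m hmS.1 ham hbm')
    exact huv (h1 ▸ h2)
  refine ⟨dstar u, dstar v, dstar m, dstar m', infIrred_dstar hu, infIrred_dstar hv,
    ?_, ?_, ?_, ?_, ?_⟩
  · exact fun h' => hnuv ((dstar_le_dstar hu hv).mp h')
  · exact fun h' => hnvu ((dstar_le_dstar hv hu).mp h')
  · intro h'
    exact hmm' (le_antisymm ((dstar_le_dstar hmS.1 hm'S.1).mp h'.le)
      ((dstar_le_dstar hm'S.1 hmS.1).mp h'.ge))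
  · refine ⟨infIrred_dstar hmS.1, (dstar_le_dstar hmS.1 hu).mpr hmS.2.1,
      (dstar_le_dstar hmS.1 hv).mpr hmS.2.2, ?_⟩
    intro w hw hwu hwv hlt
    obtain ⟨p, hpirr, rfl⟩ := dstar_surj hw
    have hpu : p ≤ u := (dstar_le_dstar hpirr hu).mp hwu
    have hpv : p ≤ v := (dstar_le_dstar hpirr hv).mp hwv
    have hmp : m < p := lt_of_le_of_ne ((dstar_le_dstar hmS.1 hpirr).mp hlt.le)
      (fun h' => hlt.ne (h' ▸ rfl))
    exact hmmax p ⟨hpirr, hpu, hpv⟩ hmp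
  · refine ⟨infIrred_dstar hm'S.1, (dstar_le_dstar hm'S.1 hu).mpr hm'S.2.1,
      (dstar_le_dstar hm'S.1 hv).mpr hm'S.2.2, ?_⟩
    intro w hw hwu hwv hlt
    obtain ⟨p, hpirr, rfl⟩ := dstar_surj hw
    have hpu : p ≤ u := (dstar_le_dstar hpirr hu).mp hwu
    have hpv : p ≤ v := (dstar_le_dstar hpirr hv).mp hwv
    have hmp : m' < p := lt_of_le_of_ne ((dstar_le_dstar hm'S.1 hpirr).mp hlt.le)
      (fun h' => hlt.ne (h' ▸ rfl))
    exact hm'max p ⟨hpirr, hpu, hpv⟩ hmp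

private lemma ddlike_iff_ddlikeDual : DDLike L ↔ DDLikeDual L := by
  constructor
  · exact ddlikeDual_of_ddlike
  · intro h
    exact ddlikeDual_orderDual_iff.mp
      (ddlikeDual_of_ddlike (L := Lᵒᵈ) (ddlike_orderDual_iff.mpr h))

private lemma ddlikeDual_iff :
    DDLikeDual L ↔ ∃ a b : L, InfIrred a ∧ InfIrred b ∧ a ⊔ b ≠ ⊤ ∧ ¬ InfIrred (a ⊔ b) := by
  rw [← ddlike_orderDual_iff, ddlike_iff (L := Lᵒᵈ)]
  rw [OrderDual.exists]
  refine exists_congr fun a => ?_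
  rw [OrderDual.exists]
  refine exists_congr fun b => ?_
  have hinf : OrderDual.toDual a ⊓ OrderDual.toDual b = OrderDual.toDual (a ⊔ b) :=
    (toDual_sup a b).symm
  rw [hinf, supIrred_toDual, supIrred_toDual, supIrred_toDual, ← OrderDual.toDual_top,
    ne_eq, OrderDual.toDual_inj, ← ne_eq]

end Dstar

theorem supIrred_meet_dual {L : Type*} [DistribLattice L] [BoundedOrder L] [Fintype L] :
    (∀ a b : L, SupIrred a → SupIrred b → a ⊓ b = ⊥ ∨ SupIrred (a ⊓ b)) ↔
      (∀ a b : L, InfIrred a → InfIrred b → a ⊔ b = ⊤ ∨ InfIrred (a ⊔ b)) := by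
  have h1 : (∀ a b : L, SupIrred a → SupIrred b → a ⊓ b = ⊥ ∨ SupIrred (a ⊓ b)) ↔ ¬ DDLike L := by
    rw [ddlike_iff]
    constructor
    · rintro h ⟨a, b, ha, hb, h1, h2⟩
      rcases h a b ha hb with h' | h'
      · exact h1 h'
      · exact h2 h'
    · intro h a b ha hb
      by_contra hc
      push_neg at hc
      exact h ⟨a, b, ha, hb, hc.1, hc.2⟩
  have h2 : (∀ a b : L, InfIrred a → InfIrred b → a ⊔ b = ⊤ ∨ InfIrred (a ⊔ b)) ↔
      ¬ DDLikeDual L := by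
    rw [ddlikeDual_iff]
    constructor
    · rintro h ⟨a, b, ha, hb, h1, h2⟩
      rcases h a b ha hb with h' | h'
      · exact h1 h'
      · exact h2 h'
    · intro h a b ha hb
      by_contra hc
      push_neg at hc
      exact h ⟨a, b, ha, hb, hc.1, hc.2⟩
  rw [h1, h2, ddlike_iff_ddlikeDual]
end
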